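/- Let P and Q be probability measures on a measurable space Ω such that for every measurable set E, P(E) ≤ e^ε·Q(E) and Q(E) ≤ e^ε·P(E) (i.e., the pair satisfies ε-DP with δ = 0). Then for every test φ : Ω → [0,1], writing α = ∫ φ dP, one has 1 − ∫ φ dQ ≥ Φ(Φ⁻¹(1−α) − μ) where μ = −2Φ⁻¹(1/(e^ε + 1)); that is, any ε-DP pair of distributions satisfies μ-GDP with μ = −2Φ⁻¹(1/(e^ε + 1)). -/

import Mathlib

open MeasureTheory

/-- The standard normal CDF `Φ`. -/
noncomputable def stdGaussianCDF (x : ℝ) : ℝ :=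
  ∫ t in Set.Iic x, Real.exp (-(t ^ 2) / 2) / Real.sqrt (2 * Real.pi)

/-- The standard normal quantile function `Φ⁻¹`. -/
noncomputable def stdGaussianQuantile : ℝ → ℝ :=
  Function.invFun stdGaussianCDF


open Set Filter

noncomputable def stdGaussPDF (t : ℝ) : ℝ := Real.exp (-(t ^ 2) / 2) / Real.sqrt (2 * Real.pi)

lemma stdGaussPDF_pos (t : ℝ) : 0 < stdGaussPDF t := by
  apply div_pos (Real.exp_pos _)
  exact Real.sqrt_pos.2 (by positivity)

lemma continuous_stdGaussPDF : Continuous stdGaussPDF := by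
  apply Continuous.div_const
  exact (Real.continuous_exp.comp (by continuity))

lemma integrable_stdGaussPDF : Integrable stdGaussPDF := by
  have h : Integrable (fun t : ℝ => Real.exp (-(1/2) * t ^ 2)) := integrable_exp_neg_mul_sq (by norm_num)
  have := h.div_const (Real.sqrt (2 * Real.pi))
  refine this.congr (Filter.Eventually.of_forall fun t => ?_)
  simp [stdGaussPDF]; ring_nf

lemma integral_stdGaussPDF : ∫ t, stdGaussPDF t = 1 := by
  have h : ∫ t : ℝ, Real.exp (-(1/2) * t ^ 2) = Real.sqrt (Real.pi / (1/2)) :=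
    integral_gaussian (1/2)
  unfold stdGaussPDF
  rw [integral_div]
  rw [show (fun t : ℝ => Real.exp (-(t^2)/2)) = (fun t : ℝ => Real.exp (-(1/2) * t ^ 2)) by
    funext t; ring_nf]
  rw [h]
  rw [show Real.pi / (1/2) = 2 * Real.pi by ring]
  exact div_self (by positivity)

lemma integrableOn_stdGaussPDF (s : Set ℝ) : IntegrableOn stdGaussPDF s :=
  integrable_stdGaussPDF.integrableOn

lemma stdGaussianCDF_eq (x : ℝ) : stdGaussianCDF x = ∫ t in Set.Iic x, stdGaussPDF t := rfl

lemma stdGaussianCDF_sub (a b : ℝ) :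
    stdGaussianCDF b - stdGaussianCDF a = ∫ t in a..b, stdGaussPDF t := by
  rw [stdGaussianCDF_eq, stdGaussianCDF_eq]
  exact intervalIntegral.integral_Iic_sub_Iic (integrableOn_stdGaussPDF _) (integrableOn_stdGaussPDF _)

lemma hasDerivAt_stdGaussianCDF (x : ℝ) : HasDerivAt stdGaussianCDF (stdGaussPDF x) x := by
  have key : ∀ u : ℝ, stdGaussianCDF u = stdGaussianCDF 0 + ∫ t in (0:ℝ)..u, stdGaussPDF t := by
    intro u; rw [← stdGaussianCDF_sub 0 u]; ring
  have h : HasDerivAt (fun u => stdGaussianCDF 0 + ∫ t in (0:ℝ)..u, stdGaussPDF t)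
      (stdGaussPDF x) x := by
    apply HasDerivAt.const_add
    exact intervalIntegral.integral_hasDerivAt_right
      integrable_stdGaussPDF.intervalIntegrable
      (continuous_stdGaussPDF.aestronglyMeasurable.stronglyMeasurableAtFilter)
      continuous_stdGaussPDF.continuousAt
  exact h.congr_deriv rfl |>.congr_of_eventuallyEq (Filter.Eventually.of_forall key) |>.congr_deriv rfl

lemma strictMono_stdGaussianCDF : StrictMono stdGaussianCDF := by
  apply strictMono_of_deriv_pos
  intro x
  rw [(hasDerivAt_stdGaussianCDF x).deriv]
  exact stdGaussPDF_pos x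

lemma continuous_stdGaussianCDF : Continuous stdGaussianCDF := by
  have : Differentiable ℝ stdGaussianCDF := fun x => (hasDerivAt_stdGaussianCDF x).differentiableAt
  exact this.continuous

lemma tendsto_stdGaussianCDF_atBot : Tendsto stdGaussianCDF atBot (nhds 0) := by
  have key : ∀ u : ℝ, stdGaussianCDF u = stdGaussianCDF 0 - ∫ t in u..(0:ℝ), stdGaussPDF t := by
    intro u; rw [← stdGaussianCDF_sub u 0]; ring
  have h := MeasureTheory.intervalIntegral_tendsto_integral_Iic (f := stdGaussPDF) (μ := volume)
    (0:ℝ) (integrableOn_stdGaussPDF _) (tendsto_id (α := ℝ) (x := atBot))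
  have : Tendsto (fun u : ℝ => stdGaussianCDF 0 - ∫ t in u..(0:ℝ), stdGaussPDF t) atBot
      (nhds (stdGaussianCDF 0 - ∫ t in Set.Iic 0, stdGaussPDF t)) :=
    (tendsto_const_nhds.sub h)
  rw [← stdGaussianCDF_eq, sub_self] at this
  exact this.congr fun u => (key u).symm

lemma tendsto_stdGaussianCDF_atTop : Tendsto stdGaussianCDF atTop (nhds 1) := by
  have key : ∀ u : ℝ, stdGaussianCDF u = stdGaussianCDF 0 + ∫ t in (0:ℝ)..u, stdGaussPDF t := by
    intro u; rw [← stdGaussianCDF_sub 0 u]; ring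
  have h := MeasureTheory.intervalIntegral_tendsto_integral_Ioi (f := stdGaussPDF) (μ := volume)
    (0:ℝ) (integrableOn_stdGaussPDF _) (tendsto_id (α := ℝ) (x := atTop))
  have h2 : Tendsto (fun u : ℝ => stdGaussianCDF 0 + ∫ t in (0:ℝ)..u, stdGaussPDF t) atTop
      (nhds (stdGaussianCDF 0 + ∫ t in Set.Ioi 0, stdGaussPDF t)) :=
    (tendsto_const_nhds.add h)
  have htotal : stdGaussianCDF 0 + ∫ t in Set.Ioi 0, stdGaussPDF t = 1 := by
    rw [stdGaussianCDF_eq]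
    rw [intervalIntegral.integral_Iic_add_Ioi (integrableOn_stdGaussPDF _) (integrableOn_stdGaussPDF _)]
    exact integral_stdGaussPDF
  rw [htotal] at h2
  exact h2.congr fun u => (key u).symm

lemma stdGaussianCDF_pos (x : ℝ) : 0 < stdGaussianCDF x := by
  obtain ⟨y, hy⟩ : ∃ y, y < x := ⟨x - 1, by linarith⟩
  have h0 : 0 ≤ stdGaussianCDF y := by
    rw [stdGaussianCDF_eq]
    exact integral_nonneg fun t => (stdGaussPDF_pos t).le
  linarith [strictMono_stdGaussianCDF hy]

lemma stdGaussianCDF_le_one (x : ℝ) : stdGaussianCDF x ≤ 1 :=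
  strictMono_stdGaussianCDF.monotone.ge_of_tendsto tendsto_stdGaussianCDF_atTop x

lemma stdGaussianCDF_lt_one (x : ℝ) : stdGaussianCDF x < 1 :=
  lt_of_lt_of_le (strictMono_stdGaussianCDF (lt_add_one x)) (stdGaussianCDF_le_one (x+1))

lemma stdGaussianCDF_neg (x : ℝ) : stdGaussianCDF (-x) = 1 - stdGaussianCDF x := by
  have h1 : stdGaussianCDF (-x) = ∫ t in Set.Ioi x, stdGaussPDF t := by
    rw [stdGaussianCDF_eq]
    rw [show (∫ t in Set.Iic (-x), stdGaussPDF t) = ∫ t in Set.Iic (-x), stdGaussPDF (-t) by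
      apply setIntegral_congr_fun measurableSet_Iic
      intro t _; simp [stdGaussPDF]]
    rw [integral_comp_neg_Iic]
    simp
  have h2 : stdGaussianCDF x + ∫ t in Set.Ioi x, stdGaussPDF t = 1 := by
    rw [stdGaussianCDF_eq]
    rw [intervalIntegral.integral_Iic_add_Ioi (integrableOn_stdGaussPDF _) (integrableOn_stdGaussPDF _)]
    exact integral_stdGaussPDF
  linarith

lemma stdGaussianCDF_surjOn : ∀ y ∈ Set.Ioo (0:ℝ) 1, ∃ x, stdGaussianCDF x = y := by
  rintro y ⟨hy0, hy1⟩
  obtain ⟨a, ha⟩ : ∃ a, stdGaussianCDF a < y :=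
    (tendsto_stdGaussianCDF_atBot.eventually (eventually_lt_nhds hy0)).exists
  obtain ⟨b, hb⟩ : ∃ b, y < stdGaussianCDF b :=
    (tendsto_stdGaussianCDF_atTop.eventually (eventually_gt_nhds hy1)).exists
  have hab : a ≤ b := by
    by_contra h
    push_neg at h
    exact absurd (strictMono_stdGaussianCDF h) (by linarith)
  have := intermediate_value_Icc hab continuous_stdGaussianCDF.continuousOn
    (Set.mem_Icc.2 ⟨ha.le, hb.le⟩)
  obtain ⟨x, _, hx⟩ := this
  exact ⟨x, hx⟩

lemma stdGaussianCDF_quantile {y : ℝ} (hy : y ∈ Set.Ioo (0:ℝ) 1) :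
    stdGaussianCDF (stdGaussianQuantile y) = y :=
  Function.invFun_eq (stdGaussianCDF_surjOn y hy)

lemma stdGaussianCDF_zero : stdGaussianCDF 0 = 1/2 := by
  have := stdGaussianCDF_neg 0
  simp at this
  linarith

lemma stdGaussianCDF_deriv : deriv stdGaussianCDF = stdGaussPDF :=
  funext fun x => (hasDerivAt_stdGaussianCDF x).deriv

lemma gauss_dp_key {ε μ : ℝ} (hε : 0 ≤ ε)
    (hμ : stdGaussianCDF (-(μ/2)) = 1/(Real.exp ε + 1)) :
    ∀ s ≤ μ/2, Real.exp ε * stdGaussianCDF (s - μ) ≤ stdGaussianCDF s := by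
  intro s hs
  set E := Real.exp ε with hE
  have hE1 : 1 ≤ E := Real.one_le_exp hε
  have hμ0 : 0 ≤ μ := by
    by_contra h
    push_neg at h
    have h2 : stdGaussianCDF 0 < stdGaussianCDF (-(μ/2)) :=
      strictMono_stdGaussianCDF (by linarith)
    rw [stdGaussianCDF_zero, hμ] at h2
    rw [div_lt_div_iff₀ (by norm_num) (by positivity)] at h2
    linarith
  -- value at μ/2 is 0
  have hval : stdGaussianCDF (μ/2) - E * stdGaussianCDF (μ/2 - μ) = 0 := by
    have h1 : stdGaussianCDF (μ/2) = 1 - stdGaussianCDF (-(μ/2)) := by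
      have := stdGaussianCDF_neg (μ/2); linarith
    have h2 : (μ:ℝ)/2 - μ = -(μ/2) := by ring
    rw [h1, h2, hμ]
    field_simp
    ring
  rcases eq_or_lt_of_le hμ0 with hμeq | hμpos
  · -- μ = 0 : then E = 1
    have h0 : stdGaussianCDF (-(μ/2)) = 1/2 := by
      rw [← hμeq]; simpa using stdGaussianCDF_zero
    rw [hμ] at h0
    have hE' : E = 1 := by
      field_simp at h0; linarith
    rw [← hμeq] at *
    simp only [sub_zero]
    rw [hE']; linarith
  -- μ > 0
  set g : ℝ → ℝ := fun s => stdGaussianCDF s - E * stdGaussianCDF (s - μ) with hg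
  suffices h : 0 ≤ g s by simp only [hg] at h; linarith
  have hderiv : ∀ x, HasDerivAt g (stdGaussPDF x - E * stdGaussPDF (x - μ)) x := by
    intro x
    have h3 := (((hasDerivAt_stdGaussianCDF (x - μ)).comp x
        ((hasDerivAt_id x).sub_const μ)).const_mul E)
    exact (hasDerivAt_stdGaussianCDF x).sub (h3.congr_deriv (by ring))
  set s₀ : ℝ := μ/2 - ε/μ with hs₀
  have hs₀le : s₀ ≤ μ/2 := by
    have : 0 ≤ ε/μ := div_nonneg hε hμpos.le
    linarith
  have hsign : ∀ x : ℝ, (x ≤ s₀ → 0 ≤ stdGaussPDF x - E * stdGaussPDF (x - μ)) ∧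
      (s₀ ≤ x → stdGaussPDF x - E * stdGaussPDF (x - μ) ≤ 0) := by
    intro x
    have hkey : E * stdGaussPDF (x - μ) = Real.exp (ε + -((x-μ)^2)/2) / Real.sqrt (2*Real.pi) := by
      rw [Real.exp_add]
      simp [stdGaussPDF, hE, mul_div_assoc]
    have hcancel : μ * (ε/μ) = ε := mul_div_cancel₀ ε hμpos.ne'
    constructor
    · intro hx
      rw [sub_nonneg, hkey]
      unfold stdGaussPDF
      rw [div_le_div_iff_of_pos_right (by positivity)]
      apply Real.exp_le_exp.2
      have h := mul_le_mul_of_nonneg_left hx hμpos.le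
      rw [hs₀, mul_sub, hcancel] at h
      nlinarith [h]
    · intro hx
      rw [sub_nonpos, hkey]
      unfold stdGaussPDF
      rw [div_le_div_iff_of_pos_right (by positivity)]
      apply Real.exp_le_exp.2
      have h := mul_le_mul_of_nonneg_left hx hμpos.le
      rw [hs₀, mul_sub, hcancel] at h
      nlinarith [h]
  have hcont : Continuous g := by
    apply continuous_stdGaussianCDF.sub
    exact (continuous_const.mul (continuous_stdGaussianCDF.comp (by continuity)))
  have hgderiv : deriv g = fun x => stdGaussPDF x - E * stdGaussPDF (x - μ) :=
    funext fun x => (hderiv x).deriv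
  -- antitone on [s₀, μ/2]
  have hanti : AntitoneOn g (Set.Icc s₀ (μ/2)) := by
    apply antitoneOn_of_deriv_nonpos (convex_Icc _ _) hcont.continuousOn
    · intro x hx
      exact (hderiv x).differentiableAt.differentiableWithinAt
    · intro x hx
      rw [interior_Icc] at hx
      rw [hgderiv]
      exact (hsign x).2 hx.1.le
  have hmono : MonotoneOn g (Set.Iic s₀) := by
    apply monotoneOn_of_deriv_nonneg (convex_Iic _) hcont.continuousOn
    · intro x hx
      exact (hderiv x).differentiableAt.differentiableWithinAt
    · intro x hx
      rw [interior_Iic] at hx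
      rw [hgderiv]
      exact (hsign x).1 hx.le
  have hlim : Tendsto g atBot (nhds 0) := by
    have h1 : Tendsto (fun s : ℝ => stdGaussianCDF (s - μ)) atBot (nhds 0) :=
      tendsto_stdGaussianCDF_atBot.comp (tendsto_atBot_add_const_right _ _ tendsto_id)
    have := tendsto_stdGaussianCDF_atBot.sub (h1.const_mul E)
    simpa using this
  have hIic_nonneg : ∀ x ≤ s₀, 0 ≤ g x := by
    intro x hx
    refine le_of_tendsto hlim ?_
    filter_upwards [eventually_le_atBot x] with t ht
    exact hmono (ht.trans hx) hx ht
  rcases le_or_gt s s₀ with hcase | hcase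
  · exact hIic_nonneg s hcase
  · have h1 : g (μ/2) ≤ g s := hanti ⟨hcase.le, hs⟩ ⟨hs₀le, le_refl _⟩ hs
    have h2 : g (μ/2) = 0 := hval
    rw [h2] at h1
    exact h1

lemma dp_integral {Ω : Type*} [MeasurableSpace Ω] (P Q : Measure Ω)
    [IsProbabilityMeasure P] [IsProbabilityMeasure Q] {k : ℝ} (hk : 0 ≤ k)
    (h : ∀ E : Set Ω, MeasurableSet E → (P E).toReal ≤ k * (Q E).toReal)
    (ψ : Ω → ℝ) (hψ : Measurable ψ) (h0 : ∀ x, 0 ≤ ψ x) (h1 : ∀ x, ψ x ≤ 1) :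
    ∫ x, ψ x ∂P ≤ k * ∫ x, ψ x ∂Q := by
  have hint : ∀ (μ : Measure Ω) [IsProbabilityMeasure μ], Integrable ψ μ := by
    intro μ _
    refine Integrable.mono' (integrable_const (1:ℝ)) hψ.aestronglyMeasurable ?_
    refine Filter.Eventually.of_forall fun x => ?_
    rw [Real.norm_eq_abs, abs_of_nonneg (h0 x)]
    exact h1 x
  have intble : ∀ (μ : Measure Ω) [IsProbabilityMeasure μ],
      IntegrableOn (fun t => ENNReal.toReal (μ {a | t ≤ ψ a})) (Set.Ioc (0:ℝ) 1) := by
    intro μ _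
    apply MeasureTheory.Measure.integrableOn_of_bounded (M := 1) measure_Ioc_lt_top.ne
    · apply (Measurable.ennreal_toReal (Antitone.measurable ?_)).aestronglyMeasurable
      exact fun _ _ hst => measure_mono (fun _ hh => hst.trans hh)
    · refine Filter.Eventually.of_forall fun t => ?_
      have hle : μ {a | t ≤ ψ a} ≤ 1 := prob_le_one
      rw [Real.norm_eq_abs, ENNReal.abs_toReal]
      exact ENNReal.toReal_le_of_le_ofReal zero_le_one (by simpa using hle)
  rw [(hint P).integral_eq_integral_Ioc_meas_le (M := 1)
      (Filter.Eventually.of_forall h0) (Filter.Eventually.of_forall h1),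
    (hint Q).integral_eq_integral_Ioc_meas_le (M := 1)
      (Filter.Eventually.of_forall h0) (Filter.Eventually.of_forall h1)]
  rw [← MeasureTheory.integral_const_mul]
  apply setIntegral_mono_on (intble P) ((intble Q).const_mul k) measurableSet_Ioc
  intro t _
  exact h _ (hψ measurableSet_Ici)

/-- The Gaussian trade-off curve `f_μ`, with `f_μ(α) = Φ(Φ⁻¹(1-α) - μ)` on `(0,1)`,
`f_μ(0) = 1` and `f_μ(1) = 0`. -/
noncomputable def gdpCurve (μ α : ℝ) : ℝ :=
  if α ≤ 0 then 1
  else if 1 ≤ α then 0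
  else stdGaussianCDF (stdGaussianQuantile (1 - α) - μ)

/-- Any pair of probability measures satisfying `ε`-DP (with `δ = 0`) satisfies
`μ`-GDP with `μ = -2 Φ⁻¹(1/(e^ε + 1))`: for every test `φ : Ω → [0,1]` with false
positive rate `α = ∫ φ dP`, the false negative rate `1 - ∫ φ dQ` is at least
`f_μ(α)`. -/
theorem pureDP_implies_GDP {Ω : Type*} [MeasurableSpace Ω]
    (P Q : Measure Ω) [IsProbabilityMeasure P] [IsProbabilityMeasure Q] (ε : ℝ)
    (hPQ : ∀ E : Set Ω, MeasurableSet E → (P E).toReal ≤ Real.exp ε * (Q E).toReal)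
    (hQP : ∀ E : Set Ω, MeasurableSet E → (Q E).toReal ≤ Real.exp ε * (P E).toReal)
    (φ : Ω → ℝ) (hφ : Measurable φ) (hφ01 : ∀ x, φ x ∈ Set.Icc (0:ℝ) 1) :
    gdpCurve (-2 * stdGaussianQuantile (1 / (Real.exp ε + 1))) (∫ x, φ x ∂P) ≤
      1 - ∫ x, φ x ∂Q := by
  have hE0 : (0:ℝ) < Real.exp ε := Real.exp_pos ε
  have hε : 0 ≤ ε := by
    have h := hPQ Set.univ MeasurableSet.univ
    simpa [measure_univ] using h
  set E := Real.exp ε with hEdef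
  set α := ∫ x, φ x ∂P with hα
  set β := ∫ x, φ x ∂Q with hβ
  have hintP : Integrable φ P := by
    refine Integrable.mono' (integrable_const (1:ℝ)) hφ.aestronglyMeasurable ?_
    exact Filter.Eventually.of_forall fun x =>
      (by rw [Real.norm_eq_abs, abs_of_nonneg (hφ01 x).1]; exact (hφ01 x).2)
  have hintQ : Integrable φ Q := by
    refine Integrable.mono' (integrable_const (1:ℝ)) hφ.aestronglyMeasurable ?_
    exact Filter.Eventually.of_forall fun x =>
      (by rw [Real.norm_eq_abs, abs_of_nonneg (hφ01 x).1]; exact (hφ01 x).2)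
  have hα0 : 0 ≤ α := integral_nonneg fun x => (hφ01 x).1
  have hβ0 : 0 ≤ β := integral_nonneg fun x => (hφ01 x).1
  have hα1 : α ≤ 1 := by
    have := integral_mono hintP (integrable_const (1:ℝ)) (fun x => (hφ01 x).2)
    simpa [measure_univ] using this
  have hβ1 : β ≤ 1 := by
    have := integral_mono hintQ (integrable_const (1:ℝ)) (fun x => (hφ01 x).2)
    simpa [measure_univ] using this
  -- β ≤ E * α
  have h₁ : β ≤ E * α := dp_integral Q P hE0.le hQP φ hφ (fun x => (hφ01 x).1) (fun x => (hφ01 x).2)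
  -- 1 - α ≤ E * (1 - β)
  have h₂ : 1 - α ≤ E * (1 - β) := by
    have key := dp_integral P Q hE0.le hPQ (fun x => 1 - φ x)
      (measurable_const.sub hφ) (fun x => by show (0:ℝ) ≤ 1 - φ x; linarith [(hφ01 x).2])
      (fun x => by show (1:ℝ) - φ x ≤ 1; linarith [(hφ01 x).1])
    have e1 : ∫ x, (1 - φ x) ∂P = 1 - α := by
      rw [integral_sub (integrable_const 1) hintP]; simp [measure_univ]; rfl
    have e2 : ∫ x, (1 - φ x) ∂Q = 1 - β := by
      rw [integral_sub (integrable_const 1) hintQ]; simp [measure_univ]; rfl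
    rw [e1, e2] at key; exact key
  -- the quantile point
  have hc : (1:ℝ)/(E + 1) ∈ Set.Ioo (0:ℝ) 1 := by
    constructor
    · positivity
    · rw [div_lt_one (by positivity)]; linarith
  set z := stdGaussianQuantile (1/(E+1)) with hz
  have hzval : stdGaussianCDF z = 1/(E+1) := stdGaussianCDF_quantile hc
  set μ := -2 * z with hμdef
  have hμval : stdGaussianCDF (-(μ/2)) = 1/(Real.exp ε + 1) := by
    rw [show -(μ/2) = z by rw [hμdef]; ring, ← hEdef]; exact hzval
  have hkey := gauss_dp_key hε hμval
  rw [← hEdef] at hkey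
  unfold gdpCurve
  split_ifs with h1 h2
  · -- α ≤ 0, so α = 0, and β ≤ E·0 = 0
    have hα' : α = 0 := le_antisymm h1 hα0
    rw [hα', mul_zero] at h₁
    linarith
  · linarith
  · -- 0 < α < 1
    push_neg at h1 h2
    have h1α : (1 - α) ∈ Set.Ioo (0:ℝ) 1 := ⟨by linarith, by linarith⟩
    set t := stdGaussianQuantile (1 - α) with ht
    have htval : stdGaussianCDF t = 1 - α := stdGaussianCDF_quantile h1α
    rcases le_or_gt t (μ/2) with hcase | hcase
    · have := hkey t hcase
      rw [htval] at this
      have h3 : E * stdGaussianCDF (t - μ) ≤ E * (1 - β) := by linarith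
      exact le_of_mul_le_mul_left h3 hE0
    · have h4 := hkey (μ - t) (by linarith)
      have h5 : (μ:ℝ) - t - μ = -t := by ring
      rw [h5, stdGaussianCDF_neg, htval] at h4
      have h6 : stdGaussianCDF (μ - t) = 1 - stdGaussianCDF (t - μ) := by
        rw [show (μ:ℝ) - t = -(t - μ) by ring, stdGaussianCDF_neg]
      rw [h6] at h4
      -- h4 : E * (1 - (1 - α)) ≤ 1 - Φ(t-μ), i.e. E·α ≤ 1 - Φ(t-μ)
      have h7 : E * α ≤ 1 - stdGaussianCDF (t - μ) := by linarith [h4]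
      linarith
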